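/- arXiv:2605.21265 — 3 statements merged into one kernel-verified Lean document; each statement's English description precedes it below -/
import Mathlib

section
/- Let x ∈ (0,1], z ∈ ℂ, and for η > 0 let m = m(iη) be the unique solution with Im(m)·η > 0 of the cubic equation -1/m = iη + x·m - |z|²/(iη + x·m). Then as η → 0⁺, m converges to (i/x)·√(x - |z|²) if |z|² ≤ x, and to 0 if |z|² > x. -/
open Filter Topology Complex

/-!
Write `m = a + i b` and `t = η + x b = Im (iη + x m)`. Clearing denominators, the real part of the
equation forces `a = 0` (otherwise it yields `t (1 + 2x|m|²) = x b < t`), and the imaginary part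
becomes the real cubic `t = b (t² + s)` with `s = |z|²`, i.e. `t (t² - (x - s)) = η (t² + s)`.
If `s > x` this gives `(s - x) b ≤ η`, so `b → 0`. If `s ≤ x`, positivity of the right-hand side
gives `t ≥ r := √(x - s)`, while `b t ≤ 1` gives `t ≤ η + √x`; hence
`(t - r)³ ≤ t (t² - r²) = O(η)`, so `t → r` and `b = (t - η) / x → r / x`.
-/

theorem tendsto_nhds_zero_of_pow_le {α : Type*} {l : Filter α} {u v : α → ℝ} {n : ℕ}
    (hn : n ≠ 0) (hu : ∀ᶠ a in l, 0 ≤ u a) (huv : ∀ᶠ a in l, u a ^ n ≤ v a)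
    (hv : Tendsto v l (𝓝 0)) : Tendsto u l (𝓝 0) := by
  have hpow : Tendsto (fun a => u a ^ n) l (𝓝 0) :=
    tendsto_of_tendsto_of_tendsto_of_le_of_le' tendsto_const_nhds hv
      (hu.mono fun a ha => pow_nonneg ha n) huv
  refine (hpow.rpow_const_nhds_zero (p := (n : ℝ)⁻¹) (by positivity)).congr' ?_
  filter_upwards [hu] with a ha using Real.pow_rpow_inv_natCast ha hn

theorem mul_sq_sub_add_eq_zero_of_neg_inv_eq {M u s : ℂ} (hM : M ≠ 0) (hu : u ≠ 0)
    (heq : -M⁻¹ = u - s / u) : M * u ^ 2 - s * M + u = 0 := by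
  have h : M * (u - s / u) = -1 := by rw [← heq]; field_simp
  calc M * u ^ 2 - s * M + u = u * (M * (u - s / u) + 1) := by field_simp
    _ = 0 := by rw [h]; ring

theorem dyson_re_eq_zero_and_im_eq {x s η : ℝ} (hx : 0 ≤ x) (hη : 0 < η) {M : ℂ}
    (heq : -M⁻¹ = I * η + x * M - s / (I * η + x * M)) (hb : 0 < M.im) :
    M.re = 0 ∧ η + x * M.im = M.im * ((η + x * M.im) ^ 2 + s) := by
  set a := M.re
  set b := M.im
  set t := η + x * b
  set u := I * η + x * M
  have hu_re : u.re = x * a := by simp [u, a]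
  have hu_im : u.im = t := by simp [u, t, b]
  have ht : x * b < t := by simp only [t]; linarith
  have ht0 : 0 < t := by nlinarith [mul_nonneg hx hb.le]
  have hM : M ≠ 0 := fun h => by simp [b, h] at hb
  have hu : u ≠ 0 := fun h => by rw [h, zero_im] at hu_im; linarith
  have hpoly := mul_sq_sub_add_eq_zero_of_neg_inv_eq hM hu heq
  have hre : a * (x ^ 2 * a ^ 2 - t ^ 2 - 2 * x * b * t - s + x) = 0 := by
    have := congrArg re hpoly
    simp only [pow_two, add_re, sub_re, mul_re, mul_im, ofReal_re, ofReal_im, hu_re, hu_im,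
      zero_re] at this
    linear_combination this
  have him : b * (x ^ 2 * a ^ 2 - t ^ 2) + 2 * x * a ^ 2 * t - s * b + t = 0 := by
    have := congrArg im hpoly
    simp only [pow_two, add_im, sub_im, mul_re, mul_im, ofReal_re, ofReal_im, hu_re, hu_im,
      zero_im] at this
    linear_combination this
  have ha : a = 0 := by
    by_contra ha
    have hx_eq := (mul_eq_zero.1 hre).resolve_left ha
    have : t * (1 + 2 * x * (a ^ 2 + b ^ 2)) = x * b := by linear_combination him - b * hx_eq
    nlinarith [mul_nonneg (mul_nonneg ht0.le hx) (add_nonneg (sq_nonneg a) (sq_nonneg b))]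
  refine ⟨ha, ?_⟩
  rw [ha] at him
  linear_combination him

section ImaginaryPart

variable {x s η b : ℝ}

theorem dyson_cubic (h : η + x * b = b * ((η + x * b) ^ 2 + s)) :
    (η + x * b) * ((η + x * b) ^ 2 - (x - s)) = η * ((η + x * b) ^ 2 + s) := by
  linear_combination (-x) * h

theorem sqrt_sub_le_of_dyson (hx : 0 ≤ x) (hs : 0 ≤ s) (hη : 0 < η) (hb : 0 < b)
    (h : η + x * b = b * ((η + x * b) ^ 2 + s)) : √(x - s) ≤ η + x * b := by
  have ht : 0 < η + x * b := by nlinarith [mul_nonneg hx hb.le]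
  have hpos : 0 < (η + x * b) * ((η + x * b) ^ 2 - (x - s)) := by
    rw [dyson_cubic h]; positivity
  rw [Real.sqrt_le_left ht.le]
  nlinarith [(pos_iff_pos_of_mul_pos hpos).1 ht]

theorem mul_le_sqrt_of_dyson (hx : 0 ≤ x) (hs : 0 ≤ s) (hη : 0 < η) (hb : 0 < b)
    (h : η + x * b = b * ((η + x * b) ^ 2 + s)) : x * b ≤ √x := by
  have ht : 0 < η + x * b := by nlinarith [mul_nonneg hx hb.le]
  have hbt : b * (η + x * b) ≤ 1 := by
    refine le_of_mul_le_mul_right ?_ ht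
    nlinarith [mul_nonneg hb.le hs]
  rw [Real.le_sqrt (mul_nonneg hx hb.le) hx]
  nlinarith [mul_nonneg hx (mul_nonneg hη.le hb.le)]

theorem sub_sqrt_pow_three_le_of_dyson (hx : 0 ≤ x) (hs : 0 ≤ s) (hsx : s ≤ x) (hη : 0 < η)
    (hb : 0 < b) (h : η + x * b = b * ((η + x * b) ^ 2 + s)) :
    (η + x * b - √(x - s)) ^ 3 ≤ η * ((η + √x) ^ 2 + s) := by
  set t := η + x * b
  set r := √(x - s)
  have hr : 0 ≤ r := Real.sqrt_nonneg _
  have hrt : r ≤ t := sqrt_sub_le_of_dyson hx hs hη hb h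
  have htx : t ≤ η + √x := by simp only [t]; linarith [mul_le_sqrt_of_dyson hx hs hη hb h]
  calc (t - r) ^ 3 ≤ t * ((t - r) * (t + r)) := by
        rw [pow_three]
        gcongr <;> linarith
    _ = η * (t ^ 2 + s) := by
        rw [← dyson_cubic h]
        linear_combination (-t) * Real.sq_sqrt (sub_nonneg.2 hsx)
    _ ≤ η * ((η + √x) ^ 2 + s) := by gcongr

theorem le_div_of_dyson (hxs : x < s) (hb : 0 < b) (h : η + x * b = b * ((η + x * b) ^ 2 + s)) :
    b ≤ η / (s - x) := by
  rw [le_div_iff₀ (sub_pos.2 hxs)]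
  nlinarith [mul_nonneg hb.le (sq_nonneg (η + x * b))]

end ImaginaryPart

section Limit

variable {x s : ℝ} {b : ℝ → ℝ}

theorem tendsto_of_dyson_of_le (hx : 0 < x) (hs : 0 ≤ s) (hsx : s ≤ x)
    (hb : ∀ η, 0 < η → 0 < b η ∧ η + x * b η = b η * ((η + x * b η) ^ 2 + s)) :
    Tendsto b (𝓝[>] 0) (𝓝 (√(x - s) / x)) := by
  have hid : Tendsto (fun η : ℝ => η) (𝓝[>] 0) (𝓝 0) :=
    tendsto_nhdsWithin_of_tendsto_nhds tendsto_id
  have hbound : Tendsto (fun η : ℝ => η * ((η + √x) ^ 2 + s)) (𝓝[>] 0) (𝓝 0) := by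
    refine tendsto_nhdsWithin_of_tendsto_nhds ?_
    simpa using ((by fun_prop : Continuous fun η : ℝ => η * ((η + √x) ^ 2 + s)).tendsto 0)
  have hgap : Tendsto (fun η => η + x * b η - √(x - s)) (𝓝[>] 0) (𝓝 0) := by
    refine tendsto_nhds_zero_of_pow_le three_ne_zero ?_ ?_ hbound <;>
      filter_upwards [self_mem_nhdsWithin] with η (hη : 0 < η)
    · exact sub_nonneg.2 (sqrt_sub_le_of_dyson hx.le hs hη (hb η hη).1 (hb η hη).2)
    · exact sub_sqrt_pow_three_le_of_dyson hx.le hs hsx hη (hb η hη).1 (hb η hη).2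
  have := ((hgap.sub hid).add_const (√(x - s))).div_const x
  simp only [zero_sub, neg_zero, zero_add] at this
  refine this.congr fun η => ?_
  field_simp
  ring

theorem tendsto_of_dyson_of_lt (hxs : x < s)
    (hb : ∀ η, 0 < η → 0 < b η ∧ η + x * b η = b η * ((η + x * b η) ^ 2 + s)) :
    Tendsto b (𝓝[>] 0) (𝓝 0) := by
  have hbound : Tendsto (fun η : ℝ => η / (s - x)) (𝓝[>] 0) (𝓝 0) := by
    refine tendsto_nhdsWithin_of_tendsto_nhds ?_
    simpa using (continuous_id.div_const (s - x)).tendsto 0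
  refine tendsto_of_tendsto_of_tendsto_of_le_of_le' tendsto_const_nhds hbound ?_ ?_ <;>
    filter_upwards [self_mem_nhdsWithin] with η (hη : 0 < η)
  · exact (hb η hη).1.le
  · exact le_div_of_dyson hxs (hb η hη).1 (hb η hη).2

end Limit

theorem minor_cubic_limit_general (x : ℝ) (hx0 : 0 < x) (z : ℂ) (m : ℝ → ℂ)
    (hm : ∀ η : ℝ, 0 < η →
      (-(m η)⁻¹ = Complex.I * (η : ℂ) + (x : ℂ) * m η -
          ((‖z‖ ^ 2 : ℝ) : ℂ) / (Complex.I * (η : ℂ) + (x : ℂ) * m η)) ∧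
      0 < (m η).im) :
    Tendsto m (nhdsWithin 0 (Set.Ioi 0))
      (nhds (if ‖z‖ ^ 2 ≤ x then (Complex.I / (x : ℂ)) * ((Real.sqrt (x - ‖z‖ ^ 2) : ℝ) : ℂ)
        else 0)) := by
  have hdyson η (hη : 0 < η) := dyson_re_eq_zero_and_im_eq hx0.le hη (hm η hη).1 (hm η hη).2
  have hb η (hη : 0 < η) := And.intro (hm η hη).2 (hdyson η hη).2
  have hm_eq : (fun η => ((m η).im : ℂ) * I) =ᶠ[𝓝[>] 0] m := by
    filter_upwards [self_mem_nhdsWithin] with η (hη : 0 < η)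
    apply Complex.ext <;> simp [(hdyson η hη).1]
  have hI {c : ℝ} (hc : Tendsto (fun η => (m η).im) (𝓝[>] 0) (𝓝 c)) :
      Tendsto m (𝓝[>] 0) (𝓝 (c * I)) :=
    (((continuous_ofReal.tendsto c).comp hc).mul_const I).congr' hm_eq
  split_ifs with hsx
  · convert hI (tendsto_of_dyson_of_le hx0 (sq_nonneg _) hsx hb) using 2
    push_cast
    ring
  · simpa using hI (tendsto_of_dyson_of_lt (not_le.1 hsx) hb)

/-- Small-`η` limit of the solution `m` of the scalar Dyson equation
`-1/m = iη + x·m - |z|²/(iη + x·m)` with `Im m · η > 0`: as `η → 0⁺`, `m` converges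
to `(i/x)·√(x - |z|²)` if `|z|² ≤ x`, and to `0` if `|z|² > x`. -/
theorem minor_cubic_limit (x : ℝ) (hx0 : 0 < x) (hx1 : x ≤ 1) (z : ℂ) (m : ℝ → ℂ)
    (hm : ∀ η : ℝ, 0 < η →
      (-(m η)⁻¹ = Complex.I * (η : ℂ) + (x : ℂ) * m η -
          ((‖z‖ ^ 2 : ℝ) : ℂ) / (Complex.I * (η : ℂ) + (x : ℂ) * m η)) ∧
      0 < (m η).im) :
    Tendsto m (nhdsWithin 0 (Set.Ioi 0))
      (nhds (if ‖z‖ ^ 2 ≤ x then (Complex.I / (x : ℂ)) * ((Real.sqrt (x - ‖z‖ ^ 2) : ℝ) : ℂ)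
        else 0)) :=
  minor_cubic_limit_general x hx0 z m hm
end

section
/- Let x ∈ (0,1], z ∈ ℂ, η > 0, m the solution of the cubic -1/m = iη + x·m - |z|²/(iη + x·m) with Im(m) > 0, and define u := m/(iη + x·m). Then as η → 0⁺, u converges to 1/x if |z|² ≤ x, and to 1/|z|² if |z|² > x. -/
/-!
Splitting the cubic for `m` into real and imaginary parts shows that a root in the upper
half-plane is purely imaginary, `m = iq`. Hence `u = q / (η + xq)` is real and solves
`(1 - |z|²u)(1 - xu)² = η²u` with `0 < u < 1/x`. As `η → 0` one of the two factors on the left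
must vanish: if `|z|² ≤ x` then `1 - xu ≤ 1 - |z|²u` gives `(1 - xu)³ ≤ η²/x`; if `|z|² > x` then
`1 - xu` stays above `1 - x/|z|² > 0`, so `1 - |z|²u = O(η²)`.
-/

open Filter Topology Complex

/-- The self-consistent equation for `u` at `w = iη`, where `u` is real, on the branch
`0 < u < 1/x`. -/
def UCubicRoot (x s η v : ℝ) : Prop :=
  0 < v ∧ x * v < 1 ∧ (1 - s * v) * (1 - x * v) ^ 2 = η ^ 2 * v

theorem uCubicRoot_div {x s η q : ℝ} (hx : 0 < x) (hη : 0 < η) (hq : 0 < q)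
    (h : x ^ 2 * q ^ 3 + 2 * η * x * q ^ 2 + (η ^ 2 + s - x) * q - η = 0) :
    UCubicRoot x s η (q / (η + x * q)) := by
  have hden : 0 < η + x * q := by positivity
  refine ⟨by positivity, ?_, ?_⟩
  · rw [mul_div_assoc', div_lt_one hden]
    linarith
  · field_simp
    linear_combination (-η ^ 2) * h

section SelfConsistent

variable {x s η : ℝ} {m : ℂ}

theorem cubic_of_selfConsistent (hm : m ≠ 0)
    (heq : -m⁻¹ = I * η + x * m - s / (I * η + x * m)) :
    (x : ℂ) ^ 2 * m ^ 3 + 2 * I * η * x * m ^ 2 + (x - s - η ^ 2) * m + I * η = 0 := by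
  have ha : I * η + x * m ≠ 0 := by
    intro ha
    rw [ha, div_zero, sub_zero, neg_eq_zero, inv_eq_zero] at heq
    exact hm heq
  field_simp at heq
  rw [eq_div_iff (by rwa [mul_comm m]), neg_one_mul] at heq
  linear_combination -heq - m * (η : ℂ) ^ 2 * I_sq

theorem re_eq_zero_and_im_cubic (hx : 0 < x) (hη : 0 < η) (him : 0 < m.im)
    (h : (x : ℂ) ^ 2 * m ^ 3 + 2 * I * η * x * m ^ 2 + (x - s - η ^ 2) * m + I * η = 0) :
    m.re = 0 ∧ x ^ 2 * m.im ^ 3 + 2 * η * x * m.im ^ 2 + (η ^ 2 + s - x) * m.im - η = 0 := by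
  obtain ⟨p, q⟩ := m
  have hre := congrArg Complex.re h
  have him' := congrArg Complex.im h
  simp only [pow_succ, pow_zero, one_mul, add_re, mul_re, ofReal_re, ofReal_im, mul_zero, sub_zero,
    mul_im, zero_mul, add_zero, re_ofNat, I_re, im_ofNat, I_im, mul_one, sub_self, zero_add, zero_sub,
    sub_re, sub_im, zero_re, add_im, zero_im] at hre him'
  have hp : p = 0 := by
    by_contra hp
    have hfac : x ^ 2 * p ^ 2 - 3 * x ^ 2 * q ^ 2 - 4 * η * x * q + x - s - η ^ 2 = 0 :=
      mul_left_cancel₀ hp (by linear_combination hre)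
    -- eliminating `x - s - η²` leaves a sum of positive terms in the imaginary part
    have hpos : 0 < 2 * x ^ 2 * p ^ 2 * q + 2 * x ^ 2 * q ^ 3 + 2 * η * x * p ^ 2
        + 2 * η * x * q ^ 2 + η := by positivity
    exact hpos.ne' (by linear_combination him' - q * hfac)
  subst hp
  exact ⟨rfl, by linear_combination -him'⟩

theorem div_eq_ofReal_of_re_eq_zero (hre : m.re = 0) :
    m / (I * η + x * m) = ((m.im / (η + x * m.im) : ℝ) : ℂ) := by
  obtain ⟨p, q⟩ := m
  obtain rfl : p = 0 := hre
  have hm : (⟨0, q⟩ : ℂ) = q * I := by simp [Complex.ext_iff]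
  change (⟨0, q⟩ : ℂ) / _ = ((q / (η + x * q) : ℝ) : ℂ)
  rw [hm, show I * η + x * (q * I) = (η + x * q) * I by ring, mul_div_mul_right _ _ I_ne_zero]
  push_cast
  rfl

theorem exists_uCubicRoot_of_selfConsistent (hx : 0 < x) (hη : 0 < η)
    (heq : -m⁻¹ = I * η + x * m - s / (I * η + x * m)) (him : 0 < m.im) :
    ∃ v : ℝ, m / (I * η + x * m) = v ∧ UCubicRoot x s η v := by
  have hm : m ≠ 0 := fun h ↦ by simp [h] at him
  obtain ⟨hre, hcubic⟩ := re_eq_zero_and_im_cubic hx hη him (cubic_of_selfConsistent hm heq)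
  exact ⟨_, div_eq_ofReal_of_re_eq_zero hre, uCubicRoot_div hx hη him hcubic⟩

end SelfConsistent

theorem tendsto_zero_of_pow_le {α : Type*} {l : Filter α} {f g : α → ℝ} {n : ℕ} (hn : n ≠ 0)
    (hfg : ∀ᶠ a in l, 0 ≤ f a ∧ f a ^ n ≤ g a) (hg : Tendsto g l (𝓝 0)) :
    Tendsto f l (𝓝 0) := by
  rw [Metric.tendsto_nhds]
  intro ε hε
  filter_upwards [hfg, hg.eventually (gt_mem_nhds (pow_pos hε n))] with a ⟨hf0, hfn⟩ hgε
  rw [Real.dist_0_eq_abs, abs_of_nonneg hf0]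
  exact (pow_lt_pow_iff_left₀ hf0 hε.le hn).1 (hfn.trans_lt hgε)

theorem tendsto_one_div_of_one_sub_mul {α : Type*} {l : Filter α} {f : α → ℝ} {t : ℝ} (ht : t ≠ 0)
    (h : Tendsto (fun a ↦ 1 - t * f a) l (𝓝 0)) : Tendsto f l (𝓝 (1 / t)) := by
  have := (tendsto_const_nhds (x := (1 : ℝ))).sub h |>.div_const t
  rw [sub_zero] at this
  refine this.congr fun a ↦ ?_
  field_simp
  ring

theorem tendsto_const_mul_sq_nhdsGT_zero (C : ℝ) :
    Tendsto (fun η : ℝ ↦ C * η ^ 2) (𝓝[>] 0) (𝓝 0) :=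
  (((continuous_pow 2).const_mul C).tendsto' 0 0 (by simp)).mono_left nhdsWithin_le_nhds

namespace UCubicRoot

variable {x s η v : ℝ}

theorem one_sub_mul_pow_three_le (h : UCubicRoot x s η v) (hx : 0 < x) (hsx : s ≤ x) :
    0 ≤ 1 - x * v ∧ (1 - x * v) ^ 3 ≤ x⁻¹ * η ^ 2 := by
  obtain ⟨hv, hxv, hrel⟩ := h
  refine ⟨by linarith, ?_⟩
  calc (1 - x * v) ^ 3 = (1 - x * v) ^ 2 * (1 - x * v) := by ring
    _ ≤ (1 - x * v) ^ 2 * (1 - s * v) := by gcongr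
    _ = η ^ 2 * v := by linear_combination hrel
    _ ≤ x⁻¹ * η ^ 2 := by
      have hvx : v ≤ x⁻¹ := by rw [← one_div, le_div_iff₀ hx]; linarith
      rw [mul_comm]
      gcongr

theorem one_sub_mul_le (h : UCubicRoot x s η v) (hx : 0 < x) (hxs : x < s) :
    0 ≤ 1 - s * v ∧ 1 - s * v ≤ s / (s - x) ^ 2 * η ^ 2 := by
  obtain ⟨hv, hxv, hrel⟩ := h
  have hs : 0 < s := hx.trans hxs
  have hsv : 0 ≤ 1 - s * v :=
    nonneg_of_mul_nonneg_left (by rw [hrel]; positivity) (by nlinarith)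
  have hgap : s - x ≤ s * (1 - x * v) := by nlinarith
  refine ⟨hsv, ?_⟩
  rw [div_mul_eq_mul_div, le_div_iff₀ (by nlinarith)]
  calc (1 - s * v) * (s - x) ^ 2 ≤ (1 - s * v) * (s * (1 - x * v)) ^ 2 := by
        gcongr
    _ = s * η ^ 2 * (s * v) := by linear_combination s ^ 2 * hrel
    _ ≤ s * η ^ 2 := mul_le_of_le_one_right (by positivity) (by linarith)

end UCubicRoot

theorem tendsto_of_uCubicRoot {x s : ℝ} {v : ℝ → ℝ} (hx : 0 < x)
    (hv : ∀ η > 0, UCubicRoot x s η (v η)) :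
    Tendsto v (𝓝[>] 0) (𝓝 (if s ≤ x then 1 / x else 1 / s)) := by
  have hv' : ∀ᶠ η in 𝓝[>] 0, UCubicRoot x s η (v η) := eventually_nhdsWithin_of_forall hv
  split_ifs with hsx
  · refine tendsto_one_div_of_one_sub_mul hx.ne' <| tendsto_zero_of_pow_le three_ne_zero ?_
      (tendsto_const_mul_sq_nhdsGT_zero x⁻¹)
    exact hv'.mono fun η h ↦ h.one_sub_mul_pow_three_le hx hsx
  · have hxs : x < s := not_le.1 hsx
    refine tendsto_one_div_of_one_sub_mul (hx.trans hxs).ne' <| tendsto_zero_of_pow_le one_ne_zero ?_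
      (tendsto_const_mul_sq_nhdsGT_zero (s / (s - x) ^ 2))
    exact hv'.mono fun η h ↦ by simpa using h.one_sub_mul_le hx hxs

theorem minor_u_limit_general (x : ℝ) (hx0 : 0 < x) (z : ℂ) (m : ℝ → ℂ)
    (hm : ∀ η : ℝ, 0 < η →
      (-(m η)⁻¹ = Complex.I * (η : ℂ) + (x : ℂ) * m η -
          ((‖z‖ ^ 2 : ℝ) : ℂ) / (Complex.I * (η : ℂ) + (x : ℂ) * m η)) ∧
      0 < (m η).im) :
    Tendsto (fun η : ℝ => m η / (Complex.I * (η : ℂ) + (x : ℂ) * m η))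
      (nhdsWithin 0 (Set.Ioi 0))
      (nhds (if ‖z‖ ^ 2 ≤ x then ((1 / x : ℝ) : ℂ) else ((1 / ‖z‖ ^ 2 : ℝ) : ℂ))) := by
  set u := fun η : ℝ => m η / (I * η + x * m η)
  have hu : ∀ η > 0, u η = (u η).re ∧ UCubicRoot x (‖z‖ ^ 2) η (u η).re := by
    intro η hη
    obtain ⟨v, hv, hroot⟩ := exists_uCubicRoot_of_selfConsistent hx0 hη (hm η hη).1 (hm η hη).2
    simpa [u, hv] using hroot
  rw [← apply_ite ((↑) : ℝ → ℂ)]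
  refine ((continuous_ofReal.tendsto _).comp
    (tendsto_of_uCubicRoot hx0 fun η hη ↦ (hu η hη).2)).congr' ?_
  filter_upwards [self_mem_nhdsWithin] with η hη using (hu η hη).1.symm

/-- Small-`η` limit of `u = m/(iη + x·m)` where `m` solves the cubic
`-1/m = iη + x·m - |z|²/(iη + x·m)` with `Im m > 0`: as `η → 0⁺`, `u` converges to
`1/x` if `|z|² ≤ x` and to `1/|z|²` if `|z|² > x`. -/
theorem minor_u_limit (x : ℝ) (hx0 : 0 < x) (hx1 : x ≤ 1) (z : ℂ) (m : ℝ → ℂ)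
    (hm : ∀ η : ℝ, 0 < η →
      (-(m η)⁻¹ = Complex.I * (η : ℂ) + (x : ℂ) * m η -
          ((‖z‖ ^ 2 : ℝ) : ℂ) / (Complex.I * (η : ℂ) + (x : ℂ) * m η)) ∧
      0 < (m η).im) :
    Tendsto (fun η : ℝ => m η / (Complex.I * (η : ℂ) + (x : ℂ) * m η))
      (nhdsWithin 0 (Set.Ioi 0))
      (nhds (if ‖z‖ ^ 2 ≤ x then ((1 / x : ℝ) : ℂ) else ((1 / ‖z‖ ^ 2 : ℝ) : ℂ))) :=
  minor_u_limit_general x hx0 z m hm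
end

section
/- Let x₁, x₂ ∈ (0,1] with x₁ ≤ x₂, and suppose for j = 1,2 that m_j, u_j satisfy the relations coming from the Dyson cubic at w_j = iη_j with η_j > 0: u_j = m_j/(iη_j + x_j m_j), -1/m_j = iη_j + x_j m_j - |z_j|² u_j/m_j · m_j (i.e. the cubic equation), with m_j purely imaginary and u_j real positive. Then β₊β₋ = x₁u₁u₂|z₁-z₂|² + (1-x₁u₁)(1-x₁u₂) + x₁|Im m₁|²·u₂·(1-x₁u₁)/u₁ + x₁|Im m₂|²·u₁·(1-x₁u₂)/u₂, where β₊β₋ := 1 + x₁²(u₁u₂|z₁z₂|)² - x₁²m₁²m₂² - 2x₁u₁u₂·Re(z₁·conj(z₂)). -/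
/-!
Writing `d = iη + x m`, the defining relations say `u d = m` and `-1/m = d - |z|²/d`; eliminating
`d` gives `m² = u (|z|² u - 1)`. Since `m` is purely imaginary, `|Im m|² = -m² = u (1 - |z|² u)`,
and after this substitution (together with `|z₁ - z₂|² = |z₁|² + |z₂|² - 2 Re (z₁ z̄₂)`) the
claimed identity is a polynomial identity in `x₁, u₁, u₂, |z₁|, |z₂|` and `Re (z₁ z̄₂)`.
-/

open ComplexConjugate

lemma sq_eq_mul_of_neg_inv_eq {K : Type*} [Field K] {d m u a : K} (hu : u = m / d)
    (hm : -m⁻¹ = d - a / d) (hu0 : u ≠ 0) : m ^ 2 = u * (a * u - 1) := by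
  have hd0 : d ≠ 0 := by rintro rfl; simp_all
  have hm0 : m ≠ 0 := by rintro rfl; simp_all
  have hud : u * d = m := by rw [hu, div_mul_cancel₀ _ hd0]
  have hquad : u * d ^ 2 - a * u + 1 = 0 := by
    field_simp at hm
    have : d * (u * d ^ 2 - a * u + 1) = 0 := by linear_combination (d ^ 2 - a) * hud - hm
    exact (mul_eq_zero.mp this).resolve_left hd0
  linear_combination -(u * d + m) * hud + u * hquad

lemma Complex.ofReal_abs_im_sq_of_re_eq_zero {m : ℂ} (hm : m.re = 0) :
    ((|m.im| ^ 2 : ℝ) : ℂ) = -m ^ 2 := by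
  conv_rhs => rw [← Complex.re_add_im m, hm]
  rw [sq_abs, Complex.ofReal_zero, zero_add, mul_pow, Complex.I_sq]
  push_cast
  ring

lemma Complex.ofReal_norm_sub_sq (z w : ℂ) :
    ((‖z - w‖ ^ 2 : ℝ) : ℂ) =
      ((‖z‖ ^ 2 : ℝ) : ℂ) + ((‖w‖ ^ 2 : ℝ) : ℂ) - 2 * ((z * conj w).re : ℂ) := by
  simp only [Complex.sq_norm, Complex.normSq_sub]
  push_cast
  ring

lemma beta_product_identity {K : Type*} [Field K] {x u₁ u₂ m₁ m₂ a₁ a₂ r : K}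
    (h₁ : m₁ ^ 2 = u₁ * (a₁ * u₁ - 1)) (h₂ : m₂ ^ 2 = u₂ * (a₂ * u₂ - 1))
    (hu₁ : u₁ ≠ 0) (hu₂ : u₂ ≠ 0) :
    1 + x ^ 2 * u₁ ^ 2 * u₂ ^ 2 * a₁ * a₂ - x ^ 2 * m₁ ^ 2 * m₂ ^ 2 - 2 * x * u₁ * u₂ * r
    = x * u₁ * u₂ * (a₁ + a₂ - 2 * r) + (1 - x * u₁) * (1 - x * u₂) +
        x * (-m₁ ^ 2) * u₂ * (1 - x * u₁) / u₁ + x * (-m₂ ^ 2) * u₁ * (1 - x * u₂) / u₂ := by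
  rw [h₁, h₂]
  field_simp
  ring

theorem beta_product_factorization_general (x₁ x₂ η₁ η₂ : ℝ) (z₁ z₂ m₁ m₂ u₁ u₂ : ℂ)
    (hu₁ : u₁ = m₁ / (Complex.I * (η₁ : ℂ) + (x₁ : ℂ) * m₁))
    (hu₂ : u₂ = m₂ / (Complex.I * (η₂ : ℂ) + (x₂ : ℂ) * m₂))
    (hc₁ : -m₁⁻¹ = Complex.I * (η₁ : ℂ) + (x₁ : ℂ) * m₁ -
      ((‖z₁‖ ^ 2 : ℝ) : ℂ) / (Complex.I * (η₁ : ℂ) + (x₁ : ℂ) * m₁))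
    (hc₂ : -m₂⁻¹ = Complex.I * (η₂ : ℂ) + (x₂ : ℂ) * m₂ -
      ((‖z₂‖ ^ 2 : ℝ) : ℂ) / (Complex.I * (η₂ : ℂ) + (x₂ : ℂ) * m₂))
    (hm₁ : m₁.re = 0) (hm₂ : m₂.re = 0)
    (hu₁pos : 0 < u₁.re) (hu₂pos : 0 < u₂.re) :
    1 + (x₁ : ℂ) ^ 2 * (u₁ * u₂ * ((‖z₁‖ * ‖z₂‖ : ℝ) : ℂ)) ^ 2 -
        (x₁ : ℂ) ^ 2 * m₁ ^ 2 * m₂ ^ 2 -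
        2 * (x₁ : ℂ) * u₁ * u₂ * (((z₁ * (starRingEnd ℂ) z₂).re : ℝ) : ℂ)
    = (x₁ : ℂ) * u₁ * u₂ * ((‖z₁ - z₂‖ ^ 2 : ℝ) : ℂ) +
        (1 - (x₁ : ℂ) * u₁) * (1 - (x₁ : ℂ) * u₂) +
        (x₁ : ℂ) * ((|m₁.im| ^ 2 : ℝ) : ℂ) * u₂ * (1 - (x₁ : ℂ) * u₁) / u₁ +
        (x₁ : ℂ) * ((|m₂.im| ^ 2 : ℝ) : ℂ) * u₁ * (1 - (x₁ : ℂ) * u₂) / u₂ := by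
  have hu₁0 : u₁ ≠ 0 := ne_of_apply_ne Complex.re hu₁pos.ne'
  have hu₂0 : u₂ ≠ 0 := ne_of_apply_ne Complex.re hu₂pos.ne'
  rw [Complex.ofReal_norm_sub_sq, Complex.ofReal_abs_im_sq_of_re_eq_zero hm₁,
    Complex.ofReal_abs_im_sq_of_re_eq_zero hm₂]
  convert beta_product_identity (x := (x₁ : ℂ)) (r := ((z₁ * conj z₂).re : ℂ))
    (sq_eq_mul_of_neg_inv_eq hu₁ hc₁ hu₁0) (sq_eq_mul_of_neg_inv_eq hu₂ hc₂ hu₂0) hu₁0 hu₂0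
    using 2
  push_cast
  ring

/-- on the imaginary axis, the product of the two nontrivial stability
eigenvalues, `β₊β₋ = 1 + x₁²(u₁u₂|z₁z₂|)² - x₁²m₁²m₂² - 2x₁u₁u₂·Re(z₁·conj z₂)`,
factorizes as a sum of four manifestly nonnegative terms. -/
theorem beta_product_factorization (x₁ x₂ η₁ η₂ : ℝ) (z₁ z₂ m₁ m₂ u₁ u₂ : ℂ)
    (hx₁ : 0 < x₁) (h12 : x₁ ≤ x₂) (hx₂ : x₂ ≤ 1) (hη₁ : 0 < η₁) (hη₂ : 0 < η₂)
    (hu₁ : u₁ = m₁ / (Complex.I * (η₁ : ℂ) + (x₁ : ℂ) * m₁))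
    (hu₂ : u₂ = m₂ / (Complex.I * (η₂ : ℂ) + (x₂ : ℂ) * m₂))
    (hc₁ : -m₁⁻¹ = Complex.I * (η₁ : ℂ) + (x₁ : ℂ) * m₁ -
      ((‖z₁‖ ^ 2 : ℝ) : ℂ) / (Complex.I * (η₁ : ℂ) + (x₁ : ℂ) * m₁))
    (hc₂ : -m₂⁻¹ = Complex.I * (η₂ : ℂ) + (x₂ : ℂ) * m₂ -
      ((‖z₂‖ ^ 2 : ℝ) : ℂ) / (Complex.I * (η₂ : ℂ) + (x₂ : ℂ) * m₂))
    (hm₁ : m₁.re = 0) (hm₂ : m₂.re = 0)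
    (hu₁im : u₁.im = 0) (hu₂im : u₂.im = 0)
    (hu₁pos : 0 < u₁.re) (hu₂pos : 0 < u₂.re) :
    1 + (x₁ : ℂ) ^ 2 * (u₁ * u₂ * ((‖z₁‖ * ‖z₂‖ : ℝ) : ℂ)) ^ 2 -
        (x₁ : ℂ) ^ 2 * m₁ ^ 2 * m₂ ^ 2 -
        2 * (x₁ : ℂ) * u₁ * u₂ * (((z₁ * (starRingEnd ℂ) z₂).re : ℝ) : ℂ)
    = (x₁ : ℂ) * u₁ * u₂ * ((‖z₁ - z₂‖ ^ 2 : ℝ) : ℂ) +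
        (1 - (x₁ : ℂ) * u₁) * (1 - (x₁ : ℂ) * u₂) +
        (x₁ : ℂ) * ((|m₁.im| ^ 2 : ℝ) : ℂ) * u₂ * (1 - (x₁ : ℂ) * u₁) / u₁ +
        (x₁ : ℂ) * ((|m₂.im| ^ 2 : ℝ) : ℂ) * u₁ * (1 - (x₁ : ℂ) * u₂) / u₂ :=
  beta_product_factorization_general x₁ x₂ η₁ η₂ z₁ z₂ m₁ m₂ u₁ u₂ hu₁ hu₂ hc₁ hc₂ hm₁ hm₂ hu₁pos
    hu₂pos
end
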